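/- Fix d ≥ 1 and matrices S, L, H in M_d(ℂ) with H Hermitian (H = H*), and let ξ₁ : ℝ → ℂ be any function. Suppose ϱ⁰⁰, ϱ⁰¹, ϱ¹⁰ : ℝ → M_d(ℂ) are differentiable on [0,∞) and satisfy, for all t ≥ 0: (ϱ⁰⁰)'(t) = 𝓓₀₀(ϱ⁰⁰(t)); (ϱ⁰¹)'(t) = 𝓓₀₀(ϱ⁰¹(t)) + conj(ξ₁(t))·𝓓₁₀(ϱ⁰⁰(t)); (ϱ¹⁰)'(t) = 𝓓₀₀(ϱ¹⁰(t)) + ξ₁(t)·𝓓₀₁(ϱ⁰⁰(t)); with initial conditions ϱ⁰⁰(0) = (ϱ⁰⁰(0))* and ϱ¹⁰(0) = (ϱ⁰¹(0))*. Then for every t ≥ 0: ϱ⁰⁰(t) = (ϱ⁰⁰(t))* and ϱ¹⁰(t) = (ϱ⁰¹(t))*. -/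

import Mathlib

open Matrix

noncomputable section

/-- Commutator `[A,B] = AB - BA`. -/
def mcomm {d : ℕ} (A B : Matrix (Fin d) (Fin d) ℂ) : Matrix (Fin d) (Fin d) ℂ :=
  A * B - B * A

/-- Heisenberg-picture superoperator `𝓛₀₀(X) = ½ L*[X,L] + ½ [L*,X]L − i[X,H]`. -/
def L00 {d : ℕ} (L H X : Matrix (Fin d) (Fin d) ℂ) : Matrix (Fin d) (Fin d) ℂ :=
  (1/2 : ℂ) • (Lᴴ * mcomm X L) + (1/2 : ℂ) • (mcomm Lᴴ X * L) - Complex.I • mcomm X H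

/-- Heisenberg-picture superoperator `𝓛₀₁(X) = [L*,X]S`. -/
def L01 {d : ℕ} (S L X : Matrix (Fin d) (Fin d) ℂ) : Matrix (Fin d) (Fin d) ℂ :=
  mcomm Lᴴ X * S

/-- Heisenberg-picture superoperator `𝓛₁₀(X) = S*[X,L]`. -/
def L10 {d : ℕ} (S L X : Matrix (Fin d) (Fin d) ℂ) : Matrix (Fin d) (Fin d) ℂ :=
  Sᴴ * mcomm X L

/-- Heisenberg-picture superoperator `𝓛₁₁(X) = S*XS − X`. -/
def L11 {d : ℕ} (S X : Matrix (Fin d) (Fin d) ℂ) : Matrix (Fin d) (Fin d) ℂ :=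
  Sᴴ * X * S - X

/-- Schrödinger-picture superoperator `𝓓₀₀(ϱ) = ½[Lϱ,L*] + ½[L,ϱL*] − i[H,ϱ]`. -/
def D00 {d : ℕ} (L H ϱ : Matrix (Fin d) (Fin d) ℂ) : Matrix (Fin d) (Fin d) ℂ :=
  (1/2 : ℂ) • mcomm (L * ϱ) Lᴴ + (1/2 : ℂ) • mcomm L (ϱ * Lᴴ) - Complex.I • mcomm H ϱ

/-- Schrödinger-picture superoperator `𝓓₀₁(ϱ) = [Sϱ,L*]`. -/
def D01 {d : ℕ} (S L ϱ : Matrix (Fin d) (Fin d) ℂ) : Matrix (Fin d) (Fin d) ℂ :=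
  mcomm (S * ϱ) Lᴴ

/-- Schrödinger-picture superoperator `𝓓₁₀(ϱ) = [L,ϱS*]`. -/
def D10 {d : ℕ} (S L ϱ : Matrix (Fin d) (Fin d) ℂ) : Matrix (Fin d) (Fin d) ℂ :=
  mcomm L (ϱ * Sᴴ)

/-- Schrödinger-picture superoperator `𝓓₁₁(ϱ) = SϱS* − ϱ`. -/
def D11 {d : ℕ} (S ϱ : Matrix (Fin d) (Fin d) ℂ) : Matrix (Fin d) (Fin d) ℂ :=
  S * ϱ * Sᴴ - ϱ

/-! If `H` is Hermitian then `𝓓₀₀` commutes with taking adjoints, so the gap `ϱ⁰⁰ − (ϱ⁰⁰)*`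
solves the linear ODE `X' = 𝓓₀₀ X` with zero initial value and vanishes by uniqueness.
Once `ϱ⁰⁰` is Hermitian, `𝓓₁₀(ϱ)* = 𝓓₀₁(ϱ*)` makes the source terms cancel in the equation
for `ϱ¹⁰ − (ϱ⁰¹)*`, which therefore solves the same ODE. -/

theorem ODE_solution_eq_zero_of_linear {E : Type*} [NormedAddCommGroup E] [NormedSpace ℝ E]
    (A : E →L[ℝ] E) {f : ℝ → E} {a : ℝ} (hf : ∀ t, a ≤ t → HasDerivAt f (A (f t)) t)
    (ha : f a = 0) : ∀ t, a ≤ t → f t = 0 := fun t ht =>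
  ODE_solution_unique (v := fun _ => A) (fun _ => A.lipschitz)
    (fun s hs => (hf s hs.1).continuousAt.continuousWithinAt)
    (fun s hs => (hf s hs.1).hasDerivWithinAt) continuousOn_const
    (fun s _ => by simpa using hasDerivWithinAt_const s (Set.Ici s) (0 : E)) ha ⟨ht, le_rfl⟩

section

open scoped Matrix.Norms.Elementwise

theorem Matrix.hasDerivAt_of_entries {m n : Type*} [Fintype m] [Fintype n]
    {f : ℝ → Matrix m n ℂ} {f' : Matrix m n ℂ} {t : ℝ}
    (hf : ∀ i j, HasDerivAt (fun s => f s i j) (f' i j) t) : HasDerivAt f f' t :=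
  hasDerivAt_pi.2 fun i => hasDerivAt_pi.2 fun j => hf i j

theorem Matrix.eq_conjTranspose_of_hasDerivAt {m n : Type*} [Fintype m] [Fintype n]
    (A : Matrix m n ℂ →ₗ[ℝ] Matrix m n ℂ) {f f' : ℝ → Matrix m n ℂ} {g g' : ℝ → Matrix n m ℂ}
    (hf : ∀ t, 0 ≤ t → ∀ i j, HasDerivAt (fun s => f s i j) (f' t i j) t)
    (hg : ∀ t, 0 ≤ t → ∀ i j, HasDerivAt (fun s => g s i j) (g' t i j) t)
    (hA : ∀ t, 0 ≤ t → f' t - (g' t)ᴴ = A (f t - (g t)ᴴ)) (h0 : f 0 = (g 0)ᴴ) :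
    ∀ t, 0 ≤ t → f t = (g t)ᴴ := by
  have hgap (t : ℝ) (ht : 0 ≤ t) :
      HasDerivAt (fun s => f s - (g s)ᴴ) (A.toContinuousLinearMap (f t - (g t)ᴴ)) t := by
    rw [LinearMap.coe_toContinuousLinearMap', ← hA t ht]
    exact hasDerivAt_of_entries fun i j => (hf t ht i j).sub (hg t ht j i).star
  intro t ht
  exact sub_eq_zero.1 (ODE_solution_eq_zero_of_linear _ hgap (sub_eq_zero.2 h0) t ht)

end

def D00Lin {d : ℕ} (L H : Matrix (Fin d) (Fin d) ℂ) :
    Matrix (Fin d) (Fin d) ℂ →ₗ[ℂ] Matrix (Fin d) (Fin d) ℂ where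
  toFun := D00 L H
  map_add' X Y := by
    simp only [D00, mcomm, mul_add, add_mul]
    module
  map_smul' c X := by
    simp only [D00, mcomm, mul_smul_comm, smul_mul_assoc, RingHom.id_apply]
    module

theorem D00_conjTranspose {d : ℕ} (L : Matrix (Fin d) (Fin d) ℂ)
    {H : Matrix (Fin d) (Fin d) ℂ} (hH : Hᴴ = H) (ϱ : Matrix (Fin d) (Fin d) ℂ) :
    (D00 L H ϱ)ᴴ = D00 L H ϱᴴ := by
  simp only [D00, mcomm, conjTranspose_sub, conjTranspose_add, conjTranspose_smul,
    conjTranspose_mul, conjTranspose_conjTranspose, hH, Complex.conj_I, star_div₀, star_one,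
    star_ofNat, Complex.star_def, neg_smul, sub_neg_eq_add, smul_sub, mul_assoc]
  module

theorem D10_conjTranspose {d : ℕ} (S L ϱ : Matrix (Fin d) (Fin d) ℂ) :
    (D10 S L ϱ)ᴴ = D01 S L ϱᴴ := by
  simp only [D10, D01, mcomm, conjTranspose_sub, conjTranspose_mul, conjTranspose_conjTranspose,
    mul_assoc]

theorem hermitian_symmetry_propagates_general
    (d : ℕ) (S L H : Matrix (Fin d) (Fin d) ℂ)
    (hH : Hᴴ = H) (ξ₁ : ℝ → ℂ)
    (ϱ00 ϱ01 ϱ10 : ℝ → Matrix (Fin d) (Fin d) ℂ)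
    (h00 : ∀ t, 0 ≤ t → ∀ i j : Fin d,
      HasDerivAt (fun s => ϱ00 s i j) ((D00 L H (ϱ00 t)) i j) t)
    (h01 : ∀ t, 0 ≤ t → ∀ i j : Fin d,
      HasDerivAt (fun s => ϱ01 s i j)
        ((D00 L H (ϱ01 t) + (starRingEnd ℂ) (ξ₁ t) • D10 S L (ϱ00 t)) i j) t)
    (h10 : ∀ t, 0 ≤ t → ∀ i j : Fin d,
      HasDerivAt (fun s => ϱ10 s i j)
        ((D00 L H (ϱ10 t) + ξ₁ t • D01 S L (ϱ00 t)) i j) t)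
    (hi00 : ϱ00 0 = (ϱ00 0)ᴴ) (hi10 : ϱ10 0 = (ϱ01 0)ᴴ) :
    ∀ t, 0 ≤ t → ϱ00 t = (ϱ00 t)ᴴ ∧ ϱ10 t = (ϱ01 t)ᴴ := by
  let A := (D00Lin L H).restrictScalars ℝ
  have hA (X : Matrix (Fin d) (Fin d) ℂ) : A X = D00 L H X := rfl
  have h00sym : ∀ t, 0 ≤ t → ϱ00 t = (ϱ00 t)ᴴ :=
    eq_conjTranspose_of_hasDerivAt A h00 h00 (fun t _ => by
      rw [map_sub, hA, hA, D00_conjTranspose L hH]) hi00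
  have h10sym : ∀ t, 0 ≤ t → ϱ10 t = (ϱ01 t)ᴴ :=
    eq_conjTranspose_of_hasDerivAt A h10 h01 (fun t ht => by
      rw [map_sub, hA, hA, conjTranspose_add, conjTranspose_smul, D00_conjTranspose L hH,
        D10_conjTranspose, ← h00sym t ht, Complex.star_def, Complex.conj_conj]
      abel) hi10
  exact fun t ht => ⟨h00sym t ht, h10sym t ht⟩

/-- Along the `(00;00)`, `(00;10)`, `(10;00)` components of the
two-photon master hierarchy (with `H` Hermitian), Hermitian symmetry of the initial data
propagates: `ϱ⁰⁰(t) = ϱ⁰⁰(t)*` and `ϱ¹⁰(t) = (ϱ⁰¹(t))*` for all `t ≥ 0`. -/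
theorem hermitian_symmetry_propagates
    (d : ℕ) (hd : 1 ≤ d) (S L H : Matrix (Fin d) (Fin d) ℂ)
    (hH : Hᴴ = H) (ξ₁ : ℝ → ℂ)
    (ϱ00 ϱ01 ϱ10 : ℝ → Matrix (Fin d) (Fin d) ℂ)
    (h00 : ∀ t, 0 ≤ t → ∀ i j : Fin d,
      HasDerivAt (fun s => ϱ00 s i j) ((D00 L H (ϱ00 t)) i j) t)
    (h01 : ∀ t, 0 ≤ t → ∀ i j : Fin d,
      HasDerivAt (fun s => ϱ01 s i j)
        ((D00 L H (ϱ01 t) + (starRingEnd ℂ) (ξ₁ t) • D10 S L (ϱ00 t)) i j) t)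
    (h10 : ∀ t, 0 ≤ t → ∀ i j : Fin d,
      HasDerivAt (fun s => ϱ10 s i j)
        ((D00 L H (ϱ10 t) + ξ₁ t • D01 S L (ϱ00 t)) i j) t)
    (hi00 : ϱ00 0 = (ϱ00 0)ᴴ) (hi10 : ϱ10 0 = (ϱ01 0)ᴴ) :
    ∀ t, 0 ≤ t → ϱ00 t = (ϱ00 t)ᴴ ∧ ϱ10 t = (ϱ01 t)ᴴ :=
  hermitian_symmetry_propagates_general d S L H hH ξ₁ ϱ00 ϱ01 ϱ10 h00 h01 h10 hi00 hi10
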